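/- arXiv:1708.03780 — 2 statements merged into one kernel-verified Lean document; each statement's English description precedes it below -/
import Mathlib

section
/- Let F be a piecewise translation of m = d+1 branches in ℝ^d whose translation vectors v_0, …, v_d have rank d, and assume F is of finite type. Let (α_0, …, α_d) be the unique tuple with all α_i > 0, Σ α_i = 1 and Σ α_i v_i = 0. Then for Lebesgue-almost every x ∈ Ω and every index i, the frequency of visits of the orbit of x to P_i is well defined and equals α_i: lim_{k→∞} (1/k) · card{0 ≤ n < k : F^n(x) ∈ P_i} = α_i. -/
/-! Almost every orbit avoids the boundaries of the pieces, since `F` is a finite patchwork of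
translations and so pulls null sets back to null sets; along such an orbit `F^[n] x ∈ P i`
exactly when the `n`-th letter of the fate of `x` is `i`. If `c k` is the vector of empirical
visit frequencies up to time `k`, then `∑ i, c k i = 1` and, by telescoping,
`∑ i, c k i • v i = (F^[k] x - x) / k`, which tends to `0 = ∑ i, α i • v i` because `Ω` is
bounded. The `v i` are affinely independent, so barycentric coordinates depend continuously on
the point and `c k → α`. -/

open MeasureTheory Topology Filter Set

/-- A piecewise translation map (PWT) of `m` branches in `ℝ^d`: a region `Ω`
partitioned into regions `P 0, …, P (m-1)` with null boundaries and pairwise disjoint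
interiors, together with translation vectors `v i` such that `P i + v i ⊆ Ω`, and a fixed
measurable resolution `idx` of the ambiguity on overlapping boundaries. -/
structure PWT (d m : ℕ) where
  Om : Set (Fin d → ℝ)
  P : Fin m → Set (Fin d → ℝ)
  v : Fin m → (Fin d → ℝ)
  idx : (Fin d → ℝ) → Fin m
  compact_Om : IsCompact Om
  region_Om : Om = closure (interior Om)
  compact_P : ∀ i, IsCompact (P i)
  region_P : ∀ i, P i = closure (interior (P i))
  union_P : Om = ⋃ i, P i
  disj_P : ∀ i j, i ≠ j → interior (P i) ∩ interior (P j) = ∅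
  null_bd_P : ∀ i, volume (frontier (P i)) = 0
  translate_mem : ∀ i, ∀ x ∈ P i, x + v i ∈ Om
  idx_mem : ∀ x ∈ Om, x ∈ P (idx x)
  idx_meas : Measurable idx

namespace PWT

variable {d m : ℕ}

/-- The piecewise translation map `F(x) = x + v_{i(x)}`. -/
def F (T : PWT d m) (x : Fin d → ℝ) : Fin d → ℝ := x + T.v (T.idx x)

/-- `Ω_0 = Ω`, `Ω_{n+1} = closure (F(Ω_n))`. -/
def OmSeq (T : PWT d m) : ℕ → Set (Fin d → ℝ)
  | 0 => T.Om
  | n + 1 => closure (T.F '' T.OmSeq n)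

/-- The attractor `A = ⋂ₙ Ω_n`. -/
def attractor (T : PWT d m) : Set (Fin d → ℝ) := ⋂ n, T.OmSeq n

/-- The fate map `𝓕(x) = (i(x), i(F x), i(F² x), …)`. -/
def fate (T : PWT d m) (x : Fin d → ℝ) : ℕ → Fin m := fun n => T.idx (T.F^[n] x)

/-- The matrix whose columns are the lattice generators `v_1 - v_0, …, v_d - v_0`. -/
noncomputable def latMatrix (T : PWT d (d + 1)) : Matrix (Fin d) (Fin d) ℝ :=
  Matrix.of fun i j => (T.v j.succ - T.v 0) i

/-- The canonical projection `π : ℝ^d → T = ℝ^d/L ≅ (ℝ/ℤ)^d`, expressed in the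
coordinates given by the lattice basis `v_1 - v_0, …, v_d - v_0` of `L`. -/
noncomputable def torusProj (T : PWT d (d + 1)) (x : Fin d → ℝ) : Fin d → AddCircle (1 : ℝ) :=
  fun i => ((T.latMatrix⁻¹.mulVec x) i : AddCircle (1 : ℝ))

end PWT

open Finset

theorem AffineIndependent.tendsto_of_tendsto_sums {α ι E : Type*} [Fintype ι]
    [NormedAddCommGroup E] [NormedSpace ℝ E] {v : ι → E} (hv : AffineIndependent ℝ v)
    {l : Filter α} {c : α → ι → ℝ} {a : ι → ℝ}
    (hsum : Tendsto (fun t => ∑ i, c t i) l (𝓝 (∑ i, a i)))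
    (hbary : Tendsto (fun t => ∑ i, c t i • v i) l (𝓝 (∑ i, a i • v i))) :
    Tendsto c l (𝓝 a) := by
  let L : (ι → ℝ) →ₗ[ℝ] ℝ × E := (∑ i, LinearMap.proj i).prod (Fintype.linearCombination ℝ v)
  have hL : LinearMap.ker L = ⊥ := by
    rw [LinearMap.ker_eq_bot']
    intro w hw
    simp only [L, LinearMap.prod_apply, LinearMap.coe_sum, LinearMap.coe_proj, Function.prod_apply,
      Finset.sum_apply, Function.eval, Fintype.linearCombination_apply, Prod.mk_eq_zero] at hw
    funext i
    refine (affineIndependent_iff_of_fintype ℝ v).1 hv w hw.1 ?_ i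
    rw [Finset.weightedVSub_eq_linear_combination _ hw.1, hw.2]
  rw [(L.isClosedEmbedding_of_injective hL).tendsto_nhds_iff]
  simpa [L, Fintype.linearCombination_apply, Function.comp_def] using hsum.prodMk_nhds hbary

theorem affineIndependent_of_linearIndependent_succ_sub {E : Type*} [AddCommGroup E]
    [Module ℝ E] {n : ℕ} {v : Fin (n + 1) → E}
    (h : LinearIndependent ℝ fun i : Fin n => v i.succ - v 0) : AffineIndependent ℝ v := by
  rw [affineIndependent_iff_linearIndependent_vsub ℝ v 0,
    ← linearIndependent_equiv (finSuccAboveEquiv 0)]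
  simpa only [Function.comp_def, finSuccAboveEquiv_apply, Fin.zero_succAbove, vsub_eq_sub] using h

theorem sum_card_filter_range_div_smul {ι M : Type*} [Fintype ι] [DecidableEq ι]
    [AddCommGroup M] [Module ℝ M] (f : ℕ → ι) (w : ι → M) (k : ℕ) :
    ∑ i, ((#{n ∈ range k | f n = i} : ℝ) / k) • w i = (k : ℝ)⁻¹ • ∑ n ∈ range k, w (f n) := by
  rw [← sum_fiberwise' (range k) f w, smul_sum]
  refine sum_congr rfl fun i _ => ?_
  rw [sum_const, div_eq_inv_mul, mul_smul, Nat.cast_smul_eq_nsmul]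

namespace PWT

variable {d m : ℕ} (T : PWT d m)

theorem mapsTo_F : MapsTo T.F T.Om T.Om :=
  fun x hx => T.translate_mem _ x (T.idx_mem x hx)

theorem measurable_F : Measurable T.F :=
  measurable_id.add (measurable_of_finite T.v |>.comp T.idx_meas)

theorem quasiMeasurePreserving_F : Measure.QuasiMeasurePreserving T.F volume volume := by
  refine ⟨T.measurable_F, Measure.AbsolutelyContinuous.mk fun s hs hs0 => ?_⟩
  rw [Measure.map_apply T.measurable_F hs]
  have hcover : T.F ⁻¹' s ⊆ ⋃ j, (· + T.v j) ⁻¹' s := fun x hx => mem_iUnion.2 ⟨T.idx x, hx⟩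
  exact measure_mono_null hcover (measure_iUnion_null fun j => by rwa [measure_preimage_add_right])

theorem ae_iterate_notMem_frontier :
    ∀ᵐ x, ∀ n, ∀ i, T.F^[n] x ∉ frontier (T.P i) := by
  refine ae_all_iff.2 fun n => ae_all_iff.2 fun i => ?_
  exact (T.quasiMeasurePreserving_F.iterate n).ae
    (measure_eq_zero_iff_ae_notMem.1 (T.null_bd_P i))

theorem mem_P_iff_idx_eq {y : Fin d → ℝ} (hy : y ∈ T.Om) (hfr : ∀ i, y ∉ frontier (T.P i))
    (i : Fin m) : y ∈ T.P i ↔ T.idx y = i := by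
  refine ⟨fun hyi => ?_, fun h => h ▸ T.idx_mem y hy⟩
  have hint : ∀ j, y ∈ T.P j → y ∈ interior (T.P j) := fun j hj => by
    rw [← self_sdiff_frontier]; exact ⟨hj, hfr j⟩
  by_contra hne
  exact (T.disj_P _ _ hne).subset ⟨hint _ (T.idx_mem y hy), hint i hyi⟩

theorem iterate_sub_eq_sum_fate (x : Fin d → ℝ) (k : ℕ) :
    T.F^[k] x - x = ∑ n ∈ range k, T.v (T.fate x n) := by
  induction k with
  | zero => simp
  | succ k ih =>
    rw [sum_range_succ, ← ih, Function.iterate_succ_apply', F, fate]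
    abel

theorem tendsto_inv_smul_iterate_sub {x : Fin d → ℝ} (hx : x ∈ T.Om) :
    Tendsto (fun k : ℕ => (k : ℝ)⁻¹ • (T.F^[k] x - x)) atTop (𝓝 0) := by
  obtain ⟨C, hC⟩ := isBounded_iff_forall_norm_le.1 T.compact_Om.isBounded
  refine tendsto_inv_atTop_zero.comp tendsto_natCast_atTop_atTop |>.zero_smul_isBoundedUnder_le ?_
  refine isBoundedUnder_of ⟨C + ‖x‖, fun k => ?_⟩
  calc ‖T.F^[k] x - x‖ ≤ ‖T.F^[k] x‖ + ‖x‖ := norm_sub_le _ _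
    _ ≤ C + ‖x‖ := by gcongr; exact hC _ (T.mapsTo_F.iterate k hx)

theorem ncard_visits_eq_card_fate {x : Fin d → ℝ} (hx : x ∈ T.Om)
    (hfr : ∀ n i, T.F^[n] x ∉ frontier (T.P i)) (k : ℕ) (i : Fin m) :
    {n : ℕ | n < k ∧ T.F^[n] x ∈ T.P i}.ncard = #{n ∈ range k | T.fate x n = i} := by
  rw [← Set.ncard_coe_finset, coe_filter]
  congr 1
  ext n
  simp only [Set.mem_ofPred_eq, Finset.mem_range]
  exact and_congr_right' <| T.mem_P_iff_idx_eq (T.mapsTo_F.iterate n hx) (hfr n) i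

end PWT

theorem pwt_visit_frequencies_general {d : ℕ} (T : PWT d (d + 1))
    (hrank : LinearIndependent ℝ (fun i : Fin d => T.v i.succ - T.v 0))
    (α : Fin (d + 1) → ℝ) (hsum : ∑ i, α i = 1)
    (hrel : ∑ i, α i • T.v i = 0) :
    ∀ᵐ x ∂(volume.restrict T.Om), ∀ i : Fin (d + 1),
      Tendsto (fun k : ℕ => ({n : ℕ | n < k ∧ T.F^[n] x ∈ T.P i}.ncard : ℝ) / k)
        atTop (𝓝 (α i)) := by
  filter_upwards [ae_restrict_of_ae T.ae_iterate_notMem_frontier,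
    ae_restrict_mem T.compact_Om.measurableSet] with x hfr hx
  set c : ℕ → Fin (d + 1) → ℝ := fun k i => (#{n ∈ range k | T.fate x n = i} : ℝ) / k
  have hc_sum : Tendsto (fun k => ∑ i, c k i) atTop (𝓝 (∑ i, α i)) := by
    rw [hsum]
    refine tendsto_const_nhds.congr' ((eventually_ne_atTop 0).mono fun k hk => ?_)
    simpa [hk] using (sum_card_filter_range_div_smul (T.fate x) (fun _ => (1 : ℝ)) k).symm
  have hc_bary : Tendsto (fun k => ∑ i, c k i • T.v i) atTop (𝓝 (∑ i, α i • T.v i)) := by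
    rw [hrel]
    simp only [c, sum_card_filter_range_div_smul, ← T.iterate_sub_eq_sum_fate]
    exact T.tendsto_inv_smul_iterate_sub hx
  have hc := (affineIndependent_of_linearIndependent_succ_sub hrank).tendsto_of_tendsto_sums
    hc_sum hc_bary
  intro i
  simp_rw [T.ncard_visits_eq_card_fate hx hfr]
  exact tendsto_pi_nhds.1 hc i

/-- For a finite type piecewise translation of `m = d+1` branches in `ℝ^d`
with translation vectors of rank `d`, and `(α_0, …, α_d)` the unique tuple with all
`α_i > 0`, `Σ α_i = 1` and `Σ α_i v_i = 0`: for Lebesgue-almost every `x ∈ Ω` and every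
`i`, the frequency of visits of the orbit of `x` to `P i` is well defined and equals
`α_i`. -/
theorem pwt_visit_frequencies {d : ℕ} (T : PWT d (d + 1))
    (hrank : LinearIndependent ℝ (fun i : Fin d => T.v i.succ - T.v 0))
    (hfin : ∃ n : ℕ, T.OmSeq (n + 1) = T.OmSeq n)
    (α : Fin (d + 1) → ℝ) (hpos : ∀ i, 0 < α i) (hsum : ∑ i, α i = 1)
    (hrel : ∑ i, α i • T.v i = 0) :
    ∀ᵐ x ∂(volume.restrict T.Om), ∀ i : Fin (d + 1),
      Tendsto (fun k : ℕ => ({n : ℕ | n < k ∧ T.F^[n] x ∈ T.P i}.ncard : ℝ) / k)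
        atTop (𝓝 (α i)) :=
  pwt_visit_frequencies_general T hrank α hsum hrel
end

section
/- Let T_1(y) = y + α (mod 1) be the rotation of the circle S = ℝ/ℤ and T_2 = T_{α,β,δ} the double rotation, with α, β irrational, 0 < β < min(δ, 1 − δ), and δ ∈ (0,1). Then there exists a finite itinerary J = (j_1, …, j_k) ∈ {1,2}^k such that the image T_J(S) = (T_{j_1} ∘ … ∘ T_{j_k})(S) is contained in an arc of length less than β. -/
/-!
Call a set attainable if it contains `T_J(S)` for some word `J`. Composing with `T₁`
translates attainable sets by `α`, and the forward orbit of `α` is dense, so an attainable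
configuration of arcs can be moved rigidly to put its base point in any open interval.
`T₂` maps `S` into an arc of length `1 - β`. An arc of length `L > β + ε` placed with `δ`
a little inside it is shortened by `T₂` (the part before `δ` jumps `β` ahead), which brings
the length down to `β + ε`. Placed across `0`, that arc is split by `T₂` into a piece of
length `< β` and a piece of length `s ∈ (ε, 2ε)`. With the long piece kept in `[0, δ]` and the
short one in `(δ, 1)`, every further `T₂` moves the short piece `β` closer; writing
`1 = Nβ + r` with `0 < r < β` (`β` is irrational), after `N - 1` steps the short piece lies
inside the long one.
-/

open MeasureTheory Topology Filter Set

/-- The rigid rotation `T₁(y) = y + α (mod 1)` of the circle `S = ℝ/ℤ`. -/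
noncomputable def rigidRot (a : ℝ) : AddCircle (1 : ℝ) → AddCircle (1 : ℝ) :=
  fun y => y + (a : AddCircle (1 : ℝ))

/-- The double rotation `T_{α,β,δ}` of the circle `S = ℝ/ℤ`:
`x ↦ x + α + β (mod 1)` if `x ≤ δ` and `x ↦ x + α (mod 1)` if `x > δ`,
where `x` is identified with its representative in `[0,1)`. -/
noncomputable def doubleRot (a b dl : ℝ) : AddCircle (1 : ℝ) → AddCircle (1 : ℝ) :=
  fun x =>
    if ((AddCircle.equivIco 1 0 x : ℝ)) ≤ dl then x + ((a + b : ℝ) : AddCircle (1 : ℝ))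
    else x + (a : AddCircle (1 : ℝ))

/-- `T_J = T_{j_1} ∘ … ∘ T_{j_k}` for a finite itinerary `J = (j_1, …, j_k)` in `{1,2}^k`;
here the letter `true` stands for the rigid rotation `T₁` and `false` for the double
rotation `T₂ = T_{α,β,δ}`. -/
noncomputable def applyWord (a b dl : ℝ) : List Bool → AddCircle (1 : ℝ) → AddCircle (1 : ℝ)
  | [] => id
  | j :: J => (cond j (rigidRot a) (doubleRot a b dl)) ∘ applyWord a b dl J

open scoped Pointwise

namespace UnitAddCircle

def arc (c ℓ : ℝ) : Set UnitAddCircle := (↑) '' Icc c (c + ℓ)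

theorem arc_subset_arc {c ℓ c' ℓ' : ℝ} (hc : c ≤ c') (hℓ : c' + ℓ' ≤ c + ℓ) :
    arc c' ℓ' ⊆ arc c ℓ :=
  image_mono (Icc_subset_Icc hc hℓ)

theorem vadd_arc (t c ℓ : ℝ) : (t : UnitAddCircle) +ᵥ arc c ℓ = arc (t + c) ℓ := by
  simp only [arc, ← image_vadd, image_image, vadd_eq_add, ← QuotientAddGroup.mk_add]
  rw [← image_image (fun x : ℝ => (x : UnitAddCircle)) (t + ·), image_const_add_Icc, add_assoc]

theorem isClosed_arc (c ℓ : ℝ) : IsClosed (arc c ℓ) :=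
  (isCompact_Icc.image (AddCircle.continuous_mk' 1)).isClosed

theorem isConnected_arc (c : ℝ) {ℓ : ℝ} (hℓ : 0 ≤ ℓ) : IsConnected (arc c ℓ) :=
  (isConnected_Icc (by linarith)).image _ (AddCircle.continuous_mk' 1).continuousOn

theorem volume_arc_le (c ℓ : ℝ) : volume (arc c ℓ) ≤ ENNReal.ofReal ℓ := by
  have hball : arc c ℓ ⊆ Metric.closedBall ((c + ℓ / 2 : ℝ) : UnitAddCircle) (ℓ / 2) := by
    rintro _ ⟨x, ⟨hx₁, hx₂⟩, rfl⟩
    rw [Metric.mem_closedBall, dist_eq_norm, ← QuotientAddGroup.mk_sub]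
    refine QuotientAddGroup.norm_mk_le_norm.trans ?_
    rw [Real.norm_eq_abs, abs_le]
    constructor <;> linarith
  calc volume (arc c ℓ) ≤ ENNReal.ofReal (min 1 (2 * (ℓ / 2))) :=
        (measure_mono hball).trans_eq (AddCircle.volume_closedBall 1 _)
    _ ≤ ENNReal.ofReal ℓ := ENNReal.ofReal_le_ofReal ((min_le_right _ _).trans_eq (by ring))

def twoArcs (c ℓ₁ D ℓ₂ : ℝ) : Set UnitAddCircle := arc c ℓ₁ ∪ arc (c + D) ℓ₂

theorem vadd_twoArcs (t c ℓ₁ D ℓ₂ : ℝ) :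
    (t : UnitAddCircle) +ᵥ twoArcs c ℓ₁ D ℓ₂ = twoArcs (t + c) ℓ₁ D ℓ₂ := by
  rw [twoArcs, vadd_set_union, vadd_arc, vadd_arc, twoArcs, add_assoc]

theorem twoArcs_subset_arc {c ℓ₁ D ℓ₂ : ℝ} (hD : 0 ≤ D) (hDℓ : D + ℓ₂ ≤ ℓ₁) :
    twoArcs c ℓ₁ D ℓ₂ ⊆ arc c ℓ₁ :=
  union_subset subset_rfl (arc_subset_arc (by linarith) (by linarith))

end UnitAddCircle

open UnitAddCircle

section DoubleRot

variable {a b dl x : ℝ}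

theorem doubleRot_coe_of_le (hx : x ∈ Ico 0 1) (hxd : x ≤ dl) :
    doubleRot a b dl x = ↑(x + (a + b)) := by
  rw [doubleRot, AddCircle.equivIco_coe_eq (by simpa using hx), if_pos hxd]
  rfl

theorem doubleRot_coe_of_lt (hx : x ∈ Ico 0 1) (hxd : dl < x) :
    doubleRot a b dl x = ↑(x + a) := by
  rw [doubleRot, AddCircle.equivIco_coe_eq (by simpa using hx), if_neg hxd.not_ge]
  rfl

theorem mapsTo_doubleRot_univ (hbd : b ≤ dl) (hdb : dl + b ≤ 1) :
    MapsTo (doubleRot a b dl) univ (arc (a + b) (1 - b)) := by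
  intro y _
  obtain ⟨x, hx, rfl⟩ : ∃ x ∈ Ico (0 : ℝ) 1, (x : UnitAddCircle) = y :=
    ⟨_, by simpa using (AddCircle.equivIco 1 0 y).2, (AddCircle.equivIco 1 0).symm_apply_apply y⟩
  by_cases hxd : x ≤ dl
  · exact ⟨_, ⟨by linarith [hx.1], by linarith⟩, (doubleRot_coe_of_le hx hxd).symm⟩
  · exact ⟨_, ⟨by linarith, by linarith [hx.2]⟩, (doubleRot_coe_of_lt hx (not_le.1 hxd)).symm⟩

theorem mapsTo_doubleRot_arc_sub {c L κ : ℝ} (hc : 0 ≤ c) (hcL : c + L < 1) (hκb : κ ≤ b)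
    (hcκ : c + κ ≤ dl) (hdL : dl + b ≤ c + L) :
    MapsTo (doubleRot a b dl) (arc c L) (arc (c + κ + a) (L - κ)) := by
  rintro _ ⟨x, ⟨hx₁, hx₂⟩, rfl⟩
  have hx : x ∈ Ico 0 1 := ⟨by linarith, by linarith⟩
  by_cases hxd : x ≤ dl
  · exact ⟨_, ⟨by linarith, by linarith⟩, (doubleRot_coe_of_le hx hxd).symm⟩
  · exact ⟨_, ⟨by linarith, by linarith⟩, (doubleRot_coe_of_lt hx (not_le.1 hxd)).symm⟩

theorem mapsTo_doubleRot_arc_twoArcs {c ℓ : ℝ} (hd₀ : 0 ≤ dl) (hdc : dl < c)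
    (hcℓ : c + ℓ ≤ 1 + dl) (hd₁ : dl < 1) :
    MapsTo (doubleRot a b dl) (arc c ℓ) (twoArcs (a + b) (c + ℓ - 1) (c - b) (1 - c)) := by
  rintro _ ⟨x, ⟨hx₁, hx₂⟩, rfl⟩
  by_cases hx1 : x < 1
  · refine Or.inr ⟨_, ⟨by linarith, by linarith⟩, (doubleRot_coe_of_lt ⟨?_, hx1⟩ ?_).symm⟩ <;>
      linarith
  · have hx : x - 1 ∈ Ico 0 1 := ⟨by linarith, by linarith⟩
    have hx1 : (x : UnitAddCircle) = ↑(x - 1) := by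
      rw [← AddCircle.coe_add_period 1 (x - 1), sub_add_cancel]
    rw [hx1, doubleRot_coe_of_le hx (by linarith)]
    exact Or.inl ⟨_, ⟨by linarith, by linarith⟩, rfl⟩

theorem mapsTo_doubleRot_twoArcs {c ℓ₁ D ℓ₂ : ℝ} (hd₀ : 0 ≤ dl) (hd₁ : dl < 1) (hc : 0 ≤ c)
    (hcd : c + ℓ₁ ≤ dl) (hdD : dl < c + D) (hD : c + D + ℓ₂ < 1) :
    MapsTo (doubleRot a b dl) (twoArcs c ℓ₁ D ℓ₂) (twoArcs (c + (a + b)) ℓ₁ (D - b) ℓ₂) := by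
  rintro _ (⟨x, ⟨hx₁, hx₂⟩, rfl⟩ | ⟨x, ⟨hx₁, hx₂⟩, rfl⟩)
  · refine Or.inl ⟨_, ⟨by linarith, by linarith⟩, (doubleRot_coe_of_le ⟨?_, ?_⟩ ?_).symm⟩ <;>
      linarith
  · refine Or.inr ⟨_, ⟨by linarith, by linarith⟩, (doubleRot_coe_of_lt ⟨?_, ?_⟩ ?_).symm⟩ <;>
      linarith

end DoubleRot

theorem exists_nat_one_sub_mul_mem_Ioo {b : ℝ} (hb : Irrational b) (hb0 : 0 < b) :
    ∃ N : ℕ, 1 - N * b ∈ Ioo 0 b := by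
  have hb' : Irrational (1 / b) := by simpa using hb.inv
  have h₁ : (⌊1 / b⌋₊ : ℝ) < 1 / b := (Nat.floor_le (by positivity)).lt_of_ne (hb'.ne_nat _).symm
  have h₂ : 1 / b < ⌊1 / b⌋₊ + 1 := Nat.lt_floor_add_one _
  rw [lt_div_iff₀ hb0] at h₁
  rw [div_lt_iff₀ hb0] at h₂
  exact ⟨_, by linarith, by linarith⟩

namespace DoubleRotation

def Attainable (a b dl : ℝ) (X : Set UnitAddCircle) : Prop :=
  ∃ J : List Bool, range (applyWord a b dl J) ⊆ X

variable {a b dl : ℝ} {X Y : Set UnitAddCircle}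

theorem attainable_univ : Attainable a b dl univ := ⟨[], subset_univ _⟩

theorem Attainable.mono (h : Attainable a b dl X) (hXY : X ⊆ Y) : Attainable a b dl Y :=
  let ⟨J, hJ⟩ := h; ⟨J, hJ.trans hXY⟩

theorem Attainable.of_mapsTo (j : Bool) (h : Attainable a b dl X)
    (hf : MapsTo (cond j (rigidRot a) (doubleRot a b dl)) X Y) : Attainable a b dl Y := by
  obtain ⟨J, hJ⟩ := h
  exact ⟨j :: J, by rintro _ ⟨y, rfl⟩; exact hf (hJ (mem_range_self y))⟩

theorem Attainable.vadd_nsmul (h : Attainable a b dl X) (n : ℕ) :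
    Attainable a b dl ((n • (a : UnitAddCircle)) +ᵥ X) := by
  induction n with
  | zero => simpa using h
  | succ n ih =>
    refine ih.of_mapsTo true ?_
    rintro _ ⟨x, hx, rfl⟩
    exact ⟨x, hx, by simp only [succ_nsmul, vadd_eq_add, cond_true, rigidRot]; abel⟩

theorem Attainable.exists_mem_Ioo (ha : Irrational a) {F : ℝ → Set UnitAddCircle}
    (hF : ∀ t c : ℝ, (t : UnitAddCircle) +ᵥ F c = F (t + c)) {c lo hi : ℝ}
    (h : Attainable a b dl (F c)) (hlt : lo < hi) :
    ∃ c' ∈ Ioo lo hi, Attainable a b dl (F c') := by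
  have hdense : DenseRange (fun n : ℕ => n • (a : UnitAddCircle)) :=
    denseRange_zsmul_iff_nsmul.1 (AddCircle.denseRange_zsmul_coe_iff.2 (by simpa using ha))
  obtain ⟨n, t, ht, htn⟩ := hdense.exists_mem_open
    (QuotientAddGroup.isOpenMap_coe (Ioo (lo - c) (hi - c)) isOpen_Ioo)
    ((nonempty_Ioo.2 (by linarith)).image _)
  refine ⟨t + c, ⟨by linarith [ht.1], by linarith [ht.2]⟩, ?_⟩
  rw [← hF, htn]
  exact h.vadd_nsmul n

theorem Attainable.exists_arc_sub (ha : Irrational a) (hbd : b < dl) (hdb : dl + b < 1)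
    {c L κ : ℝ} (h : Attainable a b dl (arc c L)) (hL : L < 1) (hκb : κ ≤ b) (hκL : κ < L - b) :
    ∃ c', Attainable a b dl (arc c' (L - κ)) := by
  obtain ⟨c₀, ⟨hlo, hhi⟩, h₀⟩ := h.exists_mem_Ioo ha (vadd_arc · · L)
    (lo := max 0 (dl + b - L)) (hi := min (1 - L) (dl - κ))
    (max_lt (lt_min (by linarith) (by linarith)) (lt_min (by linarith) (by linarith)))
  rw [max_lt_iff] at hlo
  rw [lt_min_iff] at hhi
  exact ⟨_, h₀.of_mapsTo false
    (mapsTo_doubleRot_arc_sub hlo.1.le (by linarith) hκb (by linarith) (by linarith))⟩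

theorem Attainable.exists_arc_of_le (ha : Irrational a) (hb : 0 < b) (hbd : b < dl)
    (hdb : dl + b < 1) {c L ℓ : ℝ} (h : Attainable a b dl (arc c L)) (hL : L < 1) (hbℓ : b < ℓ)
    (hℓL : ℓ ≤ L) : ∃ c', Attainable a b dl (arc c' ℓ) := by
  obtain ⟨n, hn⟩ := exists_nat_ge ((L - ℓ) / b)
  rw [div_le_iff₀ hb] at hn
  induction n generalizing c L with
  | zero => exact ⟨c, by rwa [le_antisymm (by simpa using hn) hℓL] at h⟩
  | succ n ih =>
    obtain ⟨c', h'⟩ := h.exists_arc_sub ha hbd hdb hL (min_le_left b (L - ℓ))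
      ((min_le_right _ _).trans_lt (by linarith))
    refine ih h' (by linarith [le_min hb.le (sub_nonneg.2 hℓL)])
      (by linarith [min_le_right b (L - ℓ)]) ?_
    have hnb : 0 ≤ (n : ℝ) * b := by positivity
    push_cast at hn
    rcases min_cases b (L - ℓ) with ⟨hm, -⟩ | ⟨hm, -⟩ <;> rw [hm] <;> linarith

theorem Attainable.exists_twoArcs_sub (ha : Irrational a) (hd₀ : 0 ≤ dl) (hd₁ : dl < 1)
    {c ℓ₁ D ℓ₂ : ℝ} (hℓ₁ : ℓ₁ < dl) (hℓ₂ : ℓ₂ < 1 - dl)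
    (h : Attainable a b dl (twoArcs c ℓ₁ D ℓ₂)) (hD₁ : ℓ₁ < D) (hD₂ : D < 1 - ℓ₂) :
    ∃ c', Attainable a b dl (twoArcs c' ℓ₁ (D - b) ℓ₂) := by
  obtain ⟨c₀, ⟨hlo, hhi⟩, h₀⟩ := h.exists_mem_Ioo ha (vadd_twoArcs · · ℓ₁ D ℓ₂)
    (lo := max 0 (dl - D)) (hi := min (dl - ℓ₁) (1 - ℓ₂ - D))
    (max_lt (lt_min (by linarith) (by linarith)) (lt_min (by linarith) (by linarith)))
  rw [max_lt_iff] at hlo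
  rw [lt_min_iff] at hhi
  exact ⟨_, h₀.of_mapsTo false
    (mapsTo_doubleRot_twoArcs hd₀ hd₁ hlo.1.le (by linarith) (by linarith) (by linarith))⟩

theorem Attainable.exists_twoArcs_sub_mul (ha : Irrational a) (hb : 0 ≤ b) (hd₀ : 0 ≤ dl)
    (hd₁ : dl < 1) {ℓ₁ ℓ₂ : ℝ} (hℓ₁ : ℓ₁ < dl) (hℓ₂ : ℓ₂ < 1 - dl) (k : ℕ) {c D : ℝ}
    (h : Attainable a b dl (twoArcs c ℓ₁ D ℓ₂)) (hk : ℓ₁ < D - k * b) (hD : D < 1 - ℓ₂) :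
    ∃ c', Attainable a b dl (twoArcs c' ℓ₁ (D - (k + 1) * b) ℓ₂) := by
  induction k generalizing c D with
  | zero =>
    obtain ⟨c', h'⟩ := h.exists_twoArcs_sub ha hd₀ hd₁ hℓ₁ hℓ₂ (by simpa using hk) hD
    exact ⟨c', by simpa using h'⟩
  | succ k ih =>
    push_cast at hk ⊢
    have hkb : 0 ≤ k * b := by positivity
    obtain ⟨c', h'⟩ := h.exists_twoArcs_sub ha hd₀ hd₁ hℓ₁ hℓ₂ (by linarith) hD
    obtain ⟨c'', h''⟩ := ih h' (by linarith) (by linarith)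
    exact ⟨c'', by rwa [show D - b - (k + 1) * b = D - (k + 1 + 1) * b by ring] at h''⟩

theorem exists_attainable_arc_lt (ha : Irrational a) (hb : Irrational b) (hb0 : 0 < b)
    (hb1 : b < min dl (1 - dl)) : ∃ c ℓ, 0 ≤ ℓ ∧ ℓ < b ∧ Attainable a b dl (arc c ℓ) := by
  have hbd : b < dl := hb1.trans_le (min_le_left _ _)
  have hbd' : b < 1 - dl := hb1.trans_le (min_le_right _ _)
  obtain ⟨N, hr0, hrb⟩ := exists_nat_one_sub_mul_mem_Ioo hb hb0
  obtain ⟨k, rfl⟩ : ∃ k, N = k + 2 := by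
    have : (1 : ℝ) < N := by nlinarith
    exact ⟨N - 2, by norm_cast at this; omega⟩
  set r := 1 - ((k + 2 : ℕ) : ℝ) * b with hr
  push_cast at hr
  have hkb : 0 ≤ k * b := by positivity
  obtain ⟨ε, hε0, hεr, hεb, hεd⟩ : ∃ ε : ℝ, 0 < ε ∧ 2 * ε ≤ r ∧ ε ≤ b - r ∧ 2 * ε ≤ 1 - dl :=
    ⟨min (min r (b - r)) (1 - dl) / 2, by
      have := min_le_left (min r (b - r)) (1 - dl)
      have := min_le_right (min r (b - r)) (1 - dl)
      have := min_le_left r (b - r)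
      have := min_le_right r (b - r)
      exact ⟨half_pos (lt_min (lt_min hr0 (by linarith)) (by linarith)), by linarith,
        by linarith, by linarith⟩⟩
  obtain ⟨c₀, h₀⟩ := (attainable_univ.of_mapsTo false
    (mapsTo_doubleRot_univ hbd.le (by linarith))).exists_arc_of_le ha hb0 hbd (by linarith)
    (by linarith) (ℓ := b + ε) (by linarith) (by linarith)
  obtain ⟨c, ⟨hc₁, hc₂⟩, h₁⟩ := h₀.exists_mem_Ioo ha (vadd_arc · · (b + ε))
    (lo := 1 - 2 * ε) (hi := 1 - ε) (by linarith)
  have h₂ := h₁.of_mapsTo false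
    (mapsTo_doubleRot_arc_twoArcs (by linarith) (by linarith) (by linarith) (by linarith))
  obtain ⟨c', h₃⟩ := h₂.exists_twoArcs_sub_mul ha hb0.le (by linarith) (by linarith)
    (by linarith) (by linarith) k (by linarith) (by linarith)
  exact ⟨c', _, by linarith, by linarith, h₃.mono (twoArcs_subset_arc (by linarith) (by linarith))⟩

end DoubleRotation

open DoubleRotation

theorem circle_word_into_short_arc_general (a b dl : ℝ) (ha : Irrational a)
    (hb : Irrational b) (hb0 : 0 < b) (hb1 : b < min dl (1 - dl)) :
    ∃ J : List Bool, ∃ I : Set (AddCircle (1 : ℝ)),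
      IsClosed I ∧ IsConnected I ∧ volume I < ENNReal.ofReal b ∧
        Set.range (applyWord a b dl J) ⊆ I := by
  obtain ⟨c, ℓ, hℓ, hℓb, J, hJ⟩ := exists_attainable_arc_lt ha hb hb0 hb1
  exact ⟨J, arc c ℓ, isClosed_arc c ℓ, isConnected_arc c hℓ,
    (volume_arc_le c ℓ).trans_lt ((ENNReal.ofReal_lt_ofReal_iff hb0).2 hℓb), hJ⟩

/-- For the rigid rotation `T₁(y) = y + α` and the double rotation
`T₂ = T_{α,β,δ}` with `α, β` irrational, `0 < β < min(δ, 1-δ)`, `δ ∈ (0,1)`: there is a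
finite itinerary `J` such that `T_J(S)` is contained in an arc (a closed connected subset
of `S`) of length less than `β`. -/
theorem circle_word_into_short_arc (a b dl : ℝ) (ha : Irrational a) (ha0 : 0 < a) (ha1 : a < 1)
    (hb : Irrational b) (hb0 : 0 < b) (hb1 : b < min dl (1 - dl))
    (hd0 : 0 < dl) (hd1 : dl < 1) :
    ∃ J : List Bool, ∃ I : Set (AddCircle (1 : ℝ)),
      IsClosed I ∧ IsConnected I ∧ volume I < ENNReal.ofReal b ∧
        Set.range (applyWord a b dl J) ⊆ I :=
  circle_word_into_short_arc_general a b dl ha hb hb0 hb1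
end
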